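/- For all real s, the function g(s) = 91/100 − cos s + (9/10)cos(2s) − (3/10)cos(3s) is strictly positive; equivalently, 1 − cos s + (9/10)cos(2s) − (3/10)cos(3s) > 9/100 for all real s. -/
import Mathlib

theorem stmt_7 :
    (∀ s : ℝ, 91 / 100 - Real.cos s + (9 / 10) * Real.cos (2 * s)
        - (3 / 10) * Real.cos (3 * s) > 0) ∧
    (∀ s : ℝ, 1 - Real.cos s + (9 / 10) * Real.cos (2 * s)
        - (3 / 10) * Real.cos (3 * s) > 9 / 100) := by
  have key : ∀ s : ℝ, 91 / 100 - Real.cos s + (9 / 10) * Real.cos (2 * s)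
      - (3 / 10) * Real.cos (3 * s) > 0 := by
    intro s
    have h2 : Real.cos (2 * s) = 2 * Real.cos s ^ 2 - 1 := Real.cos_two_mul s
    have h3 : Real.cos (3 * s) = 4 * Real.cos s ^ 3 - 3 * Real.cos s := by
      rw [Real.cos_three_mul]
    have hb1 : Real.cos s ≤ 1 := Real.cos_le_one s
    have hb2 : -1 ≤ Real.cos s := Real.neg_one_le_cos s
    set x := Real.cos s
    rw [h2, h3]
    nlinarith [sq_nonneg (x - 1/30), mul_nonneg (sub_nonneg.2 hb1) (sq_nonneg (x - 1/30)),
      mul_nonneg (sub_nonneg.2 hb1) (add_nonneg (by linarith : (0:ℝ) ≤ 1 + x) (le_refl 0)),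
      sq_nonneg x, mul_nonneg (by linarith : (0:ℝ) ≤ 1 - x) (by linarith : (0:ℝ) ≤ 1 + x)]
  exact ⟨key, fun s => by linarith [key s]⟩
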